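/- Let G be a connected weighted multigraph with polarization q of genus g ≥ 1. Then there exists a homogeneous polynomial P in m variables of degree 2b_1 + 1 = 2(m−n+1)+1 with rational coefficients such that for all positive edge lengths ℓ_1,…,ℓ_m one has ε(G)·η_G(ℓ_1,…,ℓ_m)² = P(ℓ_1,…,ℓ_m). -/

import Mathlib

open scoped Classical
open Matrix Filter Topology

/-- A weighted multigraph with vertex type `V` and edge index type `E`:
each edge is assigned an (ordered representative of an unordered) pair of endpoints. -/
structure WMG (V E : Type) where
  ends : E → V × V

namespace WMG

variable {V E : Type} [Fintype V] [DecidableEq V] [Fintype E] [DecidableEq E]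

/-- `a` and `b` are joined by some edge belonging to `S`. -/
def Step (G : WMG V E) (S : Set E) (a b : V) : Prop :=
  ∃ k ∈ S, G.ends k = (a, b) ∨ G.ends k = (b, a)

/-- Any two vertices can be joined by a walk using only edges from `S`. -/
def ConnectedVia (G : WMG V E) (S : Set E) : Prop :=
  ∀ a b : V, Relation.ReflTransGen (G.Step S) a b

/-- `G` is connected. -/
def Connected (G : WMG V E) : Prop := G.ConnectedVia Set.univ

/-- A set `T` of edges is a spanning tree: it has `#V - 1` edges and connects all vertices. -/
def IsSpanningTree (G : WMG V E) (T : Finset E) : Prop :=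
  T.card + 1 = Fintype.card V ∧ G.ConnectedVia ↑T

/-- `η_G(ℓ) = Σ_{T spanning tree} Π_{k ∉ T} ℓ_k`. -/
noncomputable def eta (G : WMG V E) (ℓ : E → ℝ) : ℝ :=
  ∑ T : Finset E, if G.IsSpanningTree T then ∏ k ∈ Tᶜ, ℓ k else 0

/-- The weighted Laplacian matrix of `G`. -/
noncomputable def lap (G : WMG V E) (ℓ : E → ℝ) : Matrix V V ℝ :=
  Matrix.of fun a b =>
    if a = b then
      ∑ k : E, if ((G.ends k).1 = a ∨ (G.ends k).2 = a) ∧ (G.ends k).1 ≠ (G.ends k).2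
        then (ℓ k)⁻¹ else 0
    else
      - ∑ k : E, if G.ends k = (a, b) ∨ G.ends k = (b, a) then (ℓ k)⁻¹ else 0

/-- The standard basis vector (point mass) at a vertex. -/
def delta (a : V) : V → ℝ := fun x => if x = a then 1 else 0

/-- Effective resistance `r(a,b)`: the entry at `a` of the unique solution `h` of
`Q^{(b)} h = u_a` (the Laplacian with row and column `b` deleted).  Equivalently, writing
`h̃` for the extension of `h` by `h̃ b = 0`, it is the entry at `a` of the unique `v` with
`Q v = δ_a - δ_b` and `v b = 0` (the two systems have the same solutions since all row and
column sums of `Q` vanish).  We set `r(a,a) = 0`; this is automatic in the connected case. -/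
noncomputable def res (G : WMG V E) (ℓ : E → ℝ) (a b : V) : ℝ :=
  if h : ∃! v : V → ℝ, G.lap ℓ *ᵥ v = delta a - delta b ∧ v b = 0
  then h.exists.choose a else 0

/-- The valence of a vertex (loop edges counted twice). -/
def valence (G : WMG V E) (a : V) : ℕ :=
  ∑ k : E, ((if (G.ends k).1 = a then 1 else 0) + (if (G.ends k).2 = a then 1 else 0))

/-- The genus of the polarized graph `(G, q)`: `g = #E - #V + 1 + Σ_a q(a)`. -/
def genus (G : WMG V E) (q : V → ℕ) : ℤ :=
  (Fintype.card E : ℤ) - (Fintype.card V : ℤ) + 1 + ∑ a, (q a : ℤ)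

/-- The canonical divisor `K(a) = 2 q(a) + v(a) - 2`, as a real number. -/
noncomputable def Kdiv (G : WMG V E) (q : V → ℕ) (a : V) : ℝ :=
  2 * (q a : ℝ) + (G.valence a : ℝ) - 2

/-- `F(e_k) = 1 - r(e_k)/ℓ_k` where `r(e_k)` is the resistance between the endpoints. -/
noncomputable def Fres (G : WMG V E) (ℓ : E → ℝ) (k : E) : ℝ :=
  1 - G.res ℓ (G.ends k).1 (G.ends k).2 / ℓ k

/-- Zhang's invariant `ε` of the polarized metric graph, via the paper's explicit formula. -/
noncomputable def epsilon (G : WMG V E) (q : V → ℕ) (ℓ : E → ℝ) : ℝ :=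
  (1 / (G.genus q : ℝ)) * ∑ a, ∑ b, (q a : ℝ) * G.Kdiv q b * G.res ℓ a b
  + (((G.genus q : ℝ) - 1) / (3 * (G.genus q : ℝ))) * ∑ k, (G.Fres ℓ k) ^ 2 * ℓ k
  + (1 / (2 * (G.genus q : ℝ))) * ∑ a, G.Kdiv q a *
      ∑ k, G.Fres ℓ k * (G.res ℓ a (G.ends k).1 + G.res ℓ a (G.ends k).2)

/-- `r(K, K) = Σ_{a,b} K(a) K(b) r(a,b)`. -/
noncomputable def rKK (G : WMG V E) (q : V → ℕ) (ℓ : E → ℝ) : ℝ :=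
  ∑ a, ∑ b, G.Kdiv q a * G.Kdiv q b * G.res ℓ a b

/-- Zhang's invariant `φ` of the polarized metric graph, via the paper's explicit formula
`φ = ((5g-2)/(4(g-1))) ε - (3/(8(g-1))) r(K,K) - ℓ(G)/4`. -/
noncomputable def phi (G : WMG V E) (q : V → ℕ) (ℓ : E → ℝ) : ℝ :=
  ((5 * (G.genus q : ℝ) - 2) / (4 * ((G.genus q : ℝ) - 1))) * G.epsilon q ℓ
  - (3 / (8 * ((G.genus q : ℝ) - 1))) * G.rKK q ℓ
  - (∑ k, ℓ k) / 4

/-- The map on vertices identifying `b` with `a` (realized on the subtype omitting `b`). -/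
def fuseV (a b : V) (hab : a ≠ b) (x : V) : {y : V // y ≠ b} :=
  if h : x = b then ⟨a, hab⟩ else ⟨x, h⟩

/-- The fusion `G'` of two distinct vertices `a, b` of `G`: identify `a` and `b`,
keeping all edges and lengths. -/
def fuse (G : WMG V E) (a b : V) (hab : a ≠ b) : WMG {y : V // y ≠ b} E :=
  ⟨fun k => (fuseV a b hab (G.ends k).1, fuseV a b hab (G.ends k).2)⟩

/-- The contraction `G/e` of a non-loop edge: identify the two endpoints of `e`,
delete `e`, and keep all other edges. -/
def contract (G : WMG V E) (k0 : E) (hk : (G.ends k0).1 ≠ (G.ends k0).2) :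
    WMG {y : V // y ≠ (G.ends k0).2} {k : E // k ≠ k0} :=
  ⟨fun k => (fuseV (G.ends k0).1 (G.ends k0).2 hk (G.ends k.1).1,
             fuseV (G.ends k0).1 (G.ends k0).2 hk (G.ends k.1).2)⟩

end WMG

/-- The `i`-th elementary symmetric polynomial of the family `ℓ`. -/
noncomputable def esymE {E : Type} [Fintype E] [DecidableEq E] (i : ℕ) (ℓ : E → ℝ) : ℝ :=
  ∑ s ∈ Finset.powersetCard i (Finset.univ : Finset E), ∏ k ∈ s, ℓ k

/-!
Write the Laplacian as `Q = M D Mᵀ`, with `M` the incidence matrix and `D = diag (1 / ℓ)`.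
By Cauchy–Binet, `(∏ ℓ) · det Q[W, W]` is the polynomial `∑_S (det M[W, S])² ∏_{k ∉ S} ℓ_k`,
which has integer coefficients and is homogeneous of degree `m - #W`. When `W` omits a single
vertex, `det M[W, S] = ±1` if `S` is a spanning tree and `0` otherwise, so this polynomial is `η`.
By Cramer's rule `r(a, b) · η` is the same polynomial for `W = V ∖ {a, b}`, of degree `b₁ + 1`;
if `a, b` are the ends of `e_k`, every monomial contains `ℓ_k`, so `F(e_k) · η = η - r(e_k) η / ℓ_k`
is a polynomial of degree `b₁`. Multiplying the formula for `ε` by `η²` writes `ε η²` as a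
rational combination of products of these, each homogeneous of degree `2 b₁ + 1`.
-/

open Finset MvPolynomial

namespace Matrix

variable {R : Type*} [CommRing R] {p q : ℕ}

theorem det_mul_eq_sum_det_submatrix_mul_prod (A : Matrix (Fin p) (Fin q) R)
    (B : Matrix (Fin q) (Fin p) R) :
    (A * B).det = ∑ f : Fin p → Fin q, (A.submatrix id f).det * ∏ i, B (f i) i := by
  simp only [det_apply', mul_apply, prod_univ_sum, mul_sum, Fintype.piFinset_univ, sum_mul,
    submatrix_apply, id, prod_mul_distrib]
  rw [sum_comm]
  simp only [mul_assoc]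

theorem det_submatrix_eq_zero_of_not_injective (A : Matrix (Fin p) (Fin q) R)
    {f : Fin p → Fin q} (hf : ¬ Function.Injective f) : (A.submatrix id f).det = 0 := by
  obtain ⟨i, j, hfij, hij⟩ : ∃ i j, f i = f j ∧ i ≠ j := by
    simpa [Function.Injective] using hf
  exact det_zero_of_column_eq hij fun k => by simp [hfij]

theorem det_mul_eq_sum_det_mul_det (A : Matrix (Fin p) (Fin q) R) (B : Matrix (Fin q) (Fin p) R) :
    (A * B).det = ∑ S : Finset (Fin q), if h : S.card = p then
      (A.submatrix id (S.orderEmbOfFin h)).det * (B.submatrix (S.orderEmbOfFin h) id).det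
      else 0 := by
  set T : (Fin p → Fin q) → R := fun f => (A.submatrix id f).det * ∏ i, B (f i) i
  have hT : ∀ f, T f ≠ 0 → Function.Injective f := fun f hf => by
    by_contra hinj
    exact hf (by simp [T, det_submatrix_eq_zero_of_not_injective A hinj])
  rw [det_mul_eq_sum_det_submatrix_mul_prod, ← sum_fiberwise univ (fun f => univ.image f)]
  refine sum_congr rfl fun S _ => ?_
  split_ifs with hS
  · set e := S.orderEmbOfFin hS
    have hfactor : ∀ f : Fin p → Fin q, univ.image f ⊆ S ↔ f ∈ univ.image (e ∘ ·) := by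
      intro f
      rw [← coe_subset, coe_image, coe_univ, Set.image_univ, ← range_orderEmbOfFin S hS,
        Set.range_subset_range_iff_exists_comp]
      simp [e, eq_comm]
    calc ∑ f with univ.image f = S, T f
        = ∑ f with univ.image f ⊆ S, T f := by
          refine sum_subset (fun f hf => ?_) fun f hf hfS => ?_
          · simp only [mem_filter, mem_univ, true_and] at hf ⊢
            exact hf.subset
          · by_contra h
            simp only [mem_filter, mem_univ, true_and] at hf hfS
            refine hfS (eq_of_subset_of_card_le hf ?_)
            rw [card_image_of_injective _ (hT f h), hS, card_univ, Fintype.card_fin]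
      _ = ∑ g : Fin p → Fin p, T (e ∘ g) := by
          rw [filter_congr fun f _ => hfactor f, filter_mem_eq_inter, univ_inter,
            sum_image fun g _ g' _ h => (e.injective.comp_left h)]
      _ = (A.submatrix id e * B.submatrix e id).det := by
          rw [det_mul_eq_sum_det_submatrix_mul_prod]
          rfl
      _ = _ := det_mul _ _
  · refine sum_eq_zero fun f hf => ?_
    by_contra h
    simp only [mem_filter, mem_univ, true_and] at hf
    rw [← hf, card_image_of_injective _ (hT f h), card_univ, Fintype.card_fin] at hS
    exact hS rfl

theorem det_mul_diagonal_mul_transpose (A : Matrix (Fin p) (Fin q) R) (d : Fin q → R) :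
    (A * diagonal d * Aᵀ).det = ∑ S : Finset (Fin q), if h : S.card = p then
      (A.submatrix id (S.orderEmbOfFin h)).det ^ 2 * ∏ k ∈ S, d k else 0 := by
  rw [Matrix.mul_assoc, det_mul_eq_sum_det_mul_det]
  refine sum_congr rfl fun S _ => ?_
  split_ifs with hS
  · set e := S.orderEmbOfFin hS
    have hDA : (diagonal d * Aᵀ).submatrix e id = diagonal (d ∘ e) * (A.submatrix id e)ᵀ := by
      ext i j
      simp [diagonal_mul]
    rw [hDA, det_mul, det_diagonal, det_transpose, ← S.map_orderEmbOfFin_univ hS, prod_map]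
    simp only [Function.comp_apply, RelEmbedding.coe_toEmbedding, e]
    ring
  · rfl

variable {ι κ : Type*}

theorem submatrix_succAbove_mulVec (A : Matrix ι (Fin (p + 1)) R) (r : κ → ι) (b : Fin (p + 1))
    (w : Fin p → R) : A.submatrix r b.succAbove *ᵥ w = (A *ᵥ b.insertNth 0 w) ∘ r := by
  ext i
  simp [mulVec, dotProduct, Fin.sum_univ_succAbove _ b]

theorem vecMul_submatrix_succAbove (A : Matrix (Fin (p + 1)) ι R) (c : κ → ι) {b : Fin (p + 1)}
    {v : Fin (p + 1) → R} (hv : v b = 0) :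
    (v ∘ b.succAbove) ᵥ* A.submatrix b.succAbove c = (v ᵥ* A) ∘ c := by
  ext j
  simp [vecMul, dotProduct, Fin.sum_univ_succAbove _ b, hv]

end Matrix

def IsHomogeneousRatPoly {ι : Type*} (d : ℕ) (f : (ι → ℝ) → ℝ) : Prop :=
  ∃ P : MvPolynomial ι ℚ, P.IsHomogeneous d ∧ ∀ ℓ : ι → ℝ, (∀ k, 0 < ℓ k) → f ℓ = aeval ℓ P

namespace IsHomogeneousRatPoly

variable {ι : Type*} {d d₁ d₂ : ℕ} {f g : (ι → ℝ) → ℝ}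

theorem of_isHomogeneous {P : MvPolynomial ι ℚ} (hP : P.IsHomogeneous d) :
    IsHomogeneousRatPoly d fun ℓ => aeval ℓ P :=
  ⟨P, hP, fun _ _ => rfl⟩

theorem zero : IsHomogeneousRatPoly (ι := ι) d fun _ => 0 :=
  ⟨0, isHomogeneous_zero _ _ _, fun _ _ => by simp⟩

theorem congr (hf : IsHomogeneousRatPoly d f) (h : ∀ ℓ : ι → ℝ, (∀ k, 0 < ℓ k) → f ℓ = g ℓ) :
    IsHomogeneousRatPoly d g := by
  obtain ⟨P, hP, hfP⟩ := hf
  exact ⟨P, hP, fun ℓ hℓ => (h ℓ hℓ).symm.trans (hfP ℓ hℓ)⟩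

theorem add (hf : IsHomogeneousRatPoly d f) (hg : IsHomogeneousRatPoly d g) :
    IsHomogeneousRatPoly d fun ℓ => f ℓ + g ℓ := by
  obtain ⟨P, hP, hfP⟩ := hf
  obtain ⟨Q, hQ, hgQ⟩ := hg
  exact ⟨P + Q, hP.add hQ, fun ℓ hℓ => by rw [map_add, ← hfP ℓ hℓ, ← hgQ ℓ hℓ]⟩

theorem sub (hf : IsHomogeneousRatPoly d f) (hg : IsHomogeneousRatPoly d g) :
    IsHomogeneousRatPoly d fun ℓ => f ℓ - g ℓ := by
  obtain ⟨P, hP, hfP⟩ := hf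
  obtain ⟨Q, hQ, hgQ⟩ := hg
  exact ⟨P - Q, hP.sub hQ, fun ℓ hℓ => by rw [map_sub, ← hfP ℓ hℓ, ← hgQ ℓ hℓ]⟩

theorem mul (hf : IsHomogeneousRatPoly d₁ f) (hg : IsHomogeneousRatPoly d₂ g) (hd : d₁ + d₂ = d) :
    IsHomogeneousRatPoly d fun ℓ => f ℓ * g ℓ := by
  obtain ⟨P, hP, hfP⟩ := hf
  obtain ⟨Q, hQ, hgQ⟩ := hg
  exact ⟨P * Q, hd ▸ hP.mul hQ, fun ℓ hℓ => by rw [map_mul, ← hfP ℓ hℓ, ← hgQ ℓ hℓ]⟩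

theorem const_mul {c : ℝ} (hc : ∃ r : ℚ, (r : ℝ) = c) (hf : IsHomogeneousRatPoly d f) :
    IsHomogeneousRatPoly d fun ℓ => c * f ℓ := by
  obtain ⟨r, rfl⟩ := hc
  simpa using (of_isHomogeneous (isHomogeneous_C ι r)).mul hf (zero_add d)

theorem sum {α : Type*} {s : Finset α} {f : α → (ι → ℝ) → ℝ}
    (hf : ∀ a ∈ s, IsHomogeneousRatPoly d (f a)) :
    IsHomogeneousRatPoly d fun ℓ => ∑ a ∈ s, f a ℓ := by
  induction s using Finset.cons_induction with
  | empty => simpa using zero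
  | cons a s ha ih =>
    simp only [sum_cons]
    exact (hf a (mem_cons_self a s)).add (ih fun b hb => hf b (mem_cons_of_mem hb))

theorem coord (k : ι) : IsHomogeneousRatPoly 1 fun ℓ => ℓ k :=
  ⟨X k, isHomogeneous_X ℚ k, fun ℓ _ => by simp⟩

theorem prod_coord (s : Finset ι) : IsHomogeneousRatPoly s.card fun ℓ => ∏ k ∈ s, ℓ k := by
  induction s using Finset.cons_induction with
  | empty => exact ⟨1, isHomogeneous_one ι ℚ, fun ℓ _ => by simp⟩
  | cons a s ha ih =>
    simp only [prod_cons, card_cons]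
    exact (coord a).mul ih (add_comm _ _)

end IsHomogeneousRatPoly

namespace WMG

open Relation

section Laplacian

variable {V E : Type} [DecidableEq V] (G : WMG V E)

def incMat (R : Type*) [Ring R] : Matrix V E R :=
  Matrix.of fun a k => (Pi.single (G.ends k).1 1 - Pi.single (G.ends k).2 1 : V → R) a

theorem incMat_map {R S : Type*} [Ring R] [Ring S] (f : R →+* S) :
    (G.incMat R).map f = G.incMat S := by
  ext a k
  simp [incMat, Pi.single_apply, apply_ite f]

theorem col_incMat {R : Type*} [Ring R] (k : E) :
    (G.incMat R).col k = Pi.single (G.ends k).1 1 - Pi.single (G.ends k).2 1 :=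
  rfl

theorem vecMul_incMat [Fintype V] {R : Type*} [CommRing R] (v : V → R) (k : E) :
    (v ᵥ* G.incMat R) k = v (G.ends k).1 - v (G.ends k).2 := by
  simp [vecMul, dotProduct, incMat, mul_sub, Pi.single_apply]

theorem lap_eq_incMat_mul [Fintype E] [DecidableEq E] (ℓ : E → ℝ) :
    G.lap ℓ = G.incMat ℝ * diagonal (fun k => (ℓ k)⁻¹) * (G.incMat ℝ)ᵀ := by
  ext a b
  rw [mul_apply]
  simp only [mul_diagonal, transpose_apply, lap, incMat, of_apply, Pi.sub_apply, Pi.single_apply]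
  split_ifs with hab
  · subst hab
    refine sum_congr rfl fun k _ => ?_
    split_ifs <;> grind
  · rw [← sum_neg_distrib]
    refine sum_congr rfl fun k _ => ?_
    simp only [Prod.ext_iff]
    split_ifs <;> grind

variable [Fintype V] [Fintype E] [DecidableEq E]

theorem dotProduct_lap_mulVec (ℓ : E → ℝ) (v : V → ℝ) :
    v ⬝ᵥ (G.lap ℓ *ᵥ v) = ∑ k, (ℓ k)⁻¹ * (v (G.ends k).1 - v (G.ends k).2) ^ 2 := by
  rw [lap_eq_incMat_mul, ← mulVec_mulVec, ← mulVec_mulVec, dotProduct_mulVec,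
    mulVec_transpose]
  simp only [dotProduct, mulVec_diagonal, vecMul_incMat]
  exact sum_congr rfl fun k _ => by ring

theorem sum_lap_mulVec (ℓ : E → ℝ) (v : V → ℝ) : ∑ a, (G.lap ℓ *ᵥ v) a = 0 := by
  have h : (fun _ => (1 : ℝ)) ᵥ* G.incMat ℝ = 0 := funext fun k => by simp [vecMul_incMat]
  simpa [dotProduct, lap_eq_incMat_mul, dotProduct_mulVec, ← vecMul_vecMul, h] using
    dotProduct_mulVec (fun _ => (1 : ℝ)) (G.lap ℓ) v

variable {G} {ℓ : E → ℝ}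

theorem ends_eq_of_dotProduct_lap_mulVec_eq_zero (hℓ : ∀ k, 0 < ℓ k) {v : V → ℝ}
    (hv : v ⬝ᵥ (G.lap ℓ *ᵥ v) = 0) (k : E) : v (G.ends k).1 = v (G.ends k).2 := by
  rw [dotProduct_lap_mulVec] at hv
  have hk := (sum_eq_zero_iff_of_nonneg fun j _ =>
    mul_nonneg (inv_nonneg.mpr (hℓ j).le) (sq_nonneg _)).mp hv k (mem_univ k)
  simpa [(hℓ k).ne', sub_eq_zero] using hk

theorem eq_of_dotProduct_lap_mulVec_eq_zero (hG : G.Connected) (hℓ : ∀ k, 0 < ℓ k)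
    {v : V → ℝ} (hv : v ⬝ᵥ (G.lap ℓ *ᵥ v) = 0) (a b : V) : v a = v b := by
  induction hG a b with
  | refl => rfl
  | tail _ hstep ih =>
    obtain ⟨k, -, hk | hk⟩ := hstep <;>
      have := ends_eq_of_dotProduct_lap_mulVec_eq_zero hℓ hv k <;> simp_all

theorem eq_of_lap_mulVec_eq (hG : G.Connected) (hℓ : ∀ k, 0 < ℓ k) {v w : V → ℝ} {b : V}
    (h : G.lap ℓ *ᵥ v = G.lap ℓ *ᵥ w) (hb : v b = w b) : v = w := by
  have hq : (v - w) ⬝ᵥ (G.lap ℓ *ᵥ (v - w)) = 0 := by simp [mulVec_sub, h]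
  funext a
  simpa [hb, sub_eq_zero] using eq_of_dotProduct_lap_mulVec_eq_zero hG hℓ hq a b

theorem res_eq_of_lap_mulVec (hG : G.Connected) (hℓ : ∀ k, 0 < ℓ k) {a b : V} {v : V → ℝ}
    (hv : G.lap ℓ *ᵥ v = delta a - delta b) (hvb : v b = 0) : G.res ℓ a b = v a := by
  have huniq : ∃! w : V → ℝ, G.lap ℓ *ᵥ w = delta a - delta b ∧ w b = 0 :=
    ⟨v, ⟨hv, hvb⟩, fun w hw => eq_of_lap_mulVec_eq hG hℓ (hw.1.trans hv.symm) (hw.2.trans hvb.symm)⟩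
  rw [res, dif_pos huniq, huniq.unique huniq.exists.choose_spec ⟨hv, hvb⟩]

theorem res_self (hG : G.Connected) (hℓ : ∀ k, 0 < ℓ k) (a : V) : G.res ℓ a a = 0 :=
  res_eq_of_lap_mulVec (v := 0) hG hℓ (by simp) rfl

end Laplacian


section Minors

variable {n m p : ℕ} (G : WMG (Fin n) (Fin m))

theorem det_submatrix_incMat_eq_intCast {R : Type*} [CommRing R] {ι : Type*} [Fintype ι]
    [DecidableEq ι] (r : ι → Fin n) (c : ι → Fin m) :
    ((G.incMat R).submatrix r c).det = (((G.incMat ℤ).submatrix r c).det : R) := by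
  rw [← G.incMat_map (Int.castRingHom R), submatrix_map, ← RingHom.mapMatrix_apply,
    ← RingHom.map_det, eq_intCast]

noncomputable def incMinor (r : Fin p → Fin n) (S : Finset (Fin m)) : ℤ :=
  if h : S.card = p then ((G.incMat ℤ).submatrix r (S.orderEmbOfFin h)).det else 0

noncomputable def lapMinorPoly (r : Fin p → Fin n) : MvPolynomial (Fin m) ℚ :=
  ∑ S, C ((G.incMinor r S ^ 2 : ℤ) : ℚ) * ∏ k ∈ Sᶜ, X k

theorem aeval_lapMinorPoly (r : Fin p → Fin n) (ℓ : Fin m → ℝ) :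
    aeval ℓ (G.lapMinorPoly r) = ∑ S, (G.incMinor r S : ℝ) ^ 2 * ∏ k ∈ Sᶜ, ℓ k := by
  simp [lapMinorPoly]

theorem aeval_lapMinorPoly_eq_prod_mul_det (r : Fin p → Fin n) {ℓ : Fin m → ℝ}
    (hℓ : ∀ k, ℓ k ≠ 0) :
    aeval ℓ (G.lapMinorPoly r) = (∏ k, ℓ k) * ((G.lap ℓ).submatrix r r).det := by
  have hsub : (G.lap ℓ).submatrix r r = (G.incMat ℝ).submatrix r id *
      diagonal (fun k => (ℓ k)⁻¹) * ((G.incMat ℝ).submatrix r id)ᵀ := by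
    rw [lap_eq_incMat_mul]
    ext i j
    simp [mul_apply]
  rw [hsub, det_mul_diagonal_mul_transpose, aeval_lapMinorPoly, mul_sum]
  refine sum_congr rfl fun S _ => ?_
  rw [incMinor]
  split_ifs with hS
  · have hprod : (∏ k, ℓ k) * ∏ k ∈ S, (ℓ k)⁻¹ = ∏ k ∈ Sᶜ, ℓ k := by
      rw [← prod_mul_prod_compl S ℓ, mul_right_comm, ← prod_mul_distrib,
        prod_congr rfl fun k _ => mul_inv_cancel₀ (hℓ k), prod_const_one, one_mul]
    rw [submatrix_submatrix, Function.comp_id, Function.id_comp,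
      det_submatrix_incMat_eq_intCast (R := ℝ), ← hprod]
    ring
  · simp

theorem isHomogeneous_C_mul_prod_X (c : ℚ) (s : Finset (Fin m)) :
    (C c * ∏ k ∈ s, X k : MvPolynomial (Fin m) ℚ).IsHomogeneous s.card := by
  simpa using (isHomogeneous_C _ c).mul
    (IsHomogeneous.prod s (fun k => X k) (fun _ => 1) fun k _ => isHomogeneous_X ℚ k)

theorem lapMinorPoly_isHomogeneous (r : Fin p → Fin n) :
    (G.lapMinorPoly r).IsHomogeneous (m - p) := by
  refine IsHomogeneous.sum _ _ _ fun S _ => ?_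
  by_cases hS : S.card = p
  · have h := isHomogeneous_C_mul_prod_X ((G.incMinor r S ^ 2 : ℤ) : ℚ) Sᶜ
    rwa [card_compl, Fintype.card_fin, hS] at h
  · simp only [show G.incMinor r S = 0 from dif_neg hS, zero_pow two_ne_zero, Int.cast_zero,
      C_0, zero_mul]
    exact isHomogeneous_zero _ _ _

noncomputable def lapMinorPolyDivX (r : Fin p → Fin n) (k : Fin m) : MvPolynomial (Fin m) ℚ :=
  ∑ S with k ∉ S, C ((G.incMinor r S ^ 2 : ℤ) : ℚ) * ∏ j ∈ Sᶜ.erase k, X j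

theorem incMinor_eq_zero_of_mem {r : Fin p → Fin n} {k : Fin m}
    (hr : ∀ i, r i ≠ (G.ends k).1 ∧ r i ≠ (G.ends k).2) {S : Finset (Fin m)} (hk : k ∈ S) :
    G.incMinor r S = 0 := by
  rw [incMinor]
  split_ifs with hS
  · obtain ⟨j, hj⟩ : k ∈ Set.range (S.orderEmbOfFin hS) := by simpa using hk
    refine det_eq_zero_of_column_eq_zero j fun i => ?_
    simp [incMat, hj, Pi.single_apply, (hr i).1, (hr i).2]
  · rfl

theorem lapMinorPoly_eq_X_mul {r : Fin p → Fin n} {k : Fin m}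
    (hr : ∀ i, r i ≠ (G.ends k).1 ∧ r i ≠ (G.ends k).2) :
    G.lapMinorPoly r = X k * G.lapMinorPolyDivX r k := by
  rw [lapMinorPoly, lapMinorPolyDivX, ← sum_filter_add_sum_filter_not univ (fun S => k ∉ S),
    mul_sum]
  rw [sum_eq_zero (s := univ.filter fun S => ¬ k ∉ S) fun S hS => by
    simp [G.incMinor_eq_zero_of_mem hr (by simpa using hS)], add_zero]
  refine sum_congr rfl fun S hS => ?_
  rw [← mul_prod_erase _ _ (by simpa using hS)]
  ring

theorem lapMinorPolyDivX_isHomogeneous (r : Fin p → Fin n) (k : Fin m) :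
    (G.lapMinorPolyDivX r k).IsHomogeneous (m - p - 1) := by
  refine IsHomogeneous.sum _ _ _ fun S hS => ?_
  by_cases hSp : S.card = p
  · have hkS : k ∈ Sᶜ := by simpa using hS
    have h := isHomogeneous_C_mul_prod_X ((G.incMinor r S ^ 2 : ℤ) : ℚ) (Sᶜ.erase k)
    rwa [card_erase_of_mem hkS, card_compl, Fintype.card_fin, hSp] at h
  · simp only [show G.incMinor r S = 0 from dif_neg hSp, zero_pow two_ne_zero, Int.cast_zero,
      C_0, zero_mul]
    exact isHomogeneous_zero _ _ _

end Minors

section SpanningTrees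

instance {V E : Type} (G : WMG V E) (S : Set E) : Std.Symm (G.Step S) :=
  ⟨fun _ _ ⟨k, hk, h⟩ => ⟨k, hk, h.symm⟩⟩

theorem single_sub_single_mem_span_col_incMat {V E : Type} [DecidableEq V] (G : WMG V E)
    {R : Type*} [Ring R] {S : Set E} {a b : V} (h : ReflTransGen (G.Step S) a b) :
    (Pi.single a 1 - Pi.single b 1 : V → R) ∈ Submodule.span R ((G.incMat R).col '' S) := by
  induction h with
  | refl => simp
  | tail _ hstep ih =>
    obtain ⟨k, hk, hends | hends⟩ := hstep
    · have hcol := Submodule.subset_span (R := R) (Set.mem_image_of_mem (G.incMat R).col hk)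
      rw [col_incMat, hends] at hcol
      simpa using Submodule.add_mem _ ih hcol
    · have hcol := Submodule.subset_span (R := R) (Set.mem_image_of_mem (G.incMat R).col hk)
      rw [col_incMat, hends] at hcol
      simpa using Submodule.sub_mem _ ih hcol

variable {p m : ℕ} (G : WMG (Fin (p + 1)) (Fin m))

/-- Walks inside `S` write every `δ_x - δ_b` as an integer combination of the columns in `S`,
so the minor is invertible over `ℤ`. -/
theorem isUnit_incMinor_succAbove (b : Fin (p + 1)) {S : Finset (Fin m)} (hS : S.card = p)
    (hconn : G.ConnectedVia S) : IsUnit (G.incMinor b.succAbove S) := by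
  set M := (G.incMat ℤ).submatrix b.succAbove (S.orderEmbOfFin hS)
  rw [incMinor, dif_pos hS, ← isUnit_iff_isUnit_det, ← mulVec_surjective_iff_isUnit]
  change Function.Surjective M.mulVecLin
  rw [← LinearMap.range_eq_top, range_mulVecLin, eq_top_iff, ← (Pi.basisFun ℤ (Fin p)).span_eq,
    Submodule.span_le]
  rintro _ ⟨i, rfl⟩
  have h := Submodule.mem_map_of_mem (f := LinearMap.funLeft ℤ ℤ b.succAbove)
    (G.single_sub_single_mem_span_col_incMat (hconn (b.succAbove i) b))
  have hi : LinearMap.funLeft ℤ ℤ b.succAbove (Pi.single (b.succAbove i) 1 - Pi.single b 1) =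
      Pi.basisFun ℤ (Fin p) i := by
    ext j
    simp [LinearMap.funLeft, Pi.single_apply, Fin.succAbove_ne]
  rw [Submodule.map_span, hi] at h
  refine Submodule.span_mono ?_ h
  rintro _ ⟨_, ⟨k, hk, rfl⟩, rfl⟩
  obtain ⟨j, rfl⟩ : k ∈ Set.range (S.orderEmbOfFin hS) := by simpa using hk
  exact ⟨j, rfl⟩

theorem incMinor_succAbove_eq_zero (b : Fin (p + 1)) {S : Finset (Fin m)}
    (hconn : ¬ G.ConnectedVia S) : G.incMinor b.succAbove S = 0 := by
  rw [incMinor, dite_eq_right_iff]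
  intro hS
  -- the indicator of the component of `z` is a nonzero left null vector
  obtain ⟨z, hz⟩ : ∃ z, ¬ ReflTransGen (G.Step S) z b := by
    by_contra! h
    exact hconn fun x y => (h x).trans (Std.Symm.symm _ _ (h y))
  set v : Fin (p + 1) → ℤ := fun x => if ReflTransGen (G.Step S) z x then 1 else 0
  have hvb : v b = 0 := if_neg hz
  refine exists_vecMul_eq_zero_iff.mp ⟨v ∘ b.succAbove, ?_, ?_⟩
  · obtain ⟨j, rfl⟩ := Fin.exists_succAbove_eq fun h : z = b => hz (h ▸ ReflTransGen.refl)
    exact fun h0 => absurd ReflTransGen.refl (by simpa [v] using congrFun h0 j)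
  · rw [vecMul_submatrix_succAbove _ _ hvb]
    ext j
    have hk := S.orderEmbOfFin_mem hS j
    have hclosed : ReflTransGen (G.Step S) z (G.ends (S.orderEmbOfFin hS j)).1 ↔
        ReflTransGen (G.Step S) z (G.ends (S.orderEmbOfFin hS j)).2 :=
      ⟨fun h => h.tail ⟨_, hk, Or.inl rfl⟩, fun h => h.tail ⟨_, hk, Or.inr rfl⟩⟩
    simp [vecMul_incMat, v, hclosed]

theorem incMinor_succAbove_sq (b : Fin (p + 1)) (S : Finset (Fin m)) :
    G.incMinor b.succAbove S ^ 2 = if G.IsSpanningTree S then 1 else 0 := by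
  by_cases hS : S.card = p
  · by_cases hconn : G.ConnectedVia S
    · rw [if_pos ⟨by simp [hS], hconn⟩, Int.isUnit_sq (G.isUnit_incMinor_succAbove b hS hconn)]
    · rw [if_neg fun h => hconn h.2, G.incMinor_succAbove_eq_zero b hconn, zero_pow two_ne_zero]
  · rw [if_neg fun h => hS (by simpa using h.1), incMinor, dif_neg hS, zero_pow two_ne_zero]

theorem eta_eq_aeval_lapMinorPoly (b : Fin (p + 1)) (ℓ : Fin m → ℝ) :
    G.eta ℓ = aeval ℓ (G.lapMinorPoly b.succAbove) := by
  rw [aeval_lapMinorPoly, eta]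
  refine sum_congr rfl fun S _ => ?_
  rw [← Int.cast_pow, incMinor_succAbove_sq]
  split_ifs <;> simp

end SpanningTrees

section Resistance

variable {p : ℕ} {E : Type} [Fintype E] [DecidableEq E] {ℓ : E → ℝ}

theorem lap_mulVec_eq_of_apply_succAbove {G : WMG (Fin (p + 1)) E} (b : Fin (p + 1))
    {v u : Fin (p + 1) → ℝ} (hu : ∑ x, u x = 0)
    (h : ∀ i, (G.lap ℓ *ᵥ v) (b.succAbove i) = u (b.succAbove i)) : G.lap ℓ *ᵥ v = u := by
  have hsum := G.sum_lap_mulVec ℓ v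
  rw [Fin.sum_univ_succAbove _ b] at hsum hu
  simp only [h] at hsum
  funext x
  by_cases hx : x = b
  · subst hx
    linarith
  · obtain ⟨i, rfl⟩ := Fin.exists_succAbove_eq hx
    exact h i

theorem det_lap_submatrix_succAbove_ne_zero {G : WMG (Fin (p + 1)) E} (hG : G.Connected)
    (hℓ : ∀ k, 0 < ℓ k) (b : Fin (p + 1)) :
    ((G.lap ℓ).submatrix b.succAbove b.succAbove).det ≠ 0 := by
  intro h0
  obtain ⟨w, hw, hAw⟩ := exists_mulVec_eq_zero_iff.mpr h0
  have hLw : G.lap ℓ *ᵥ b.insertNth 0 w = G.lap ℓ *ᵥ 0 := by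
    rw [mulVec_zero]
    refine lap_mulVec_eq_of_apply_succAbove b (by simp) fun i => ?_
    simpa [hAw] using (congrFun (submatrix_succAbove_mulVec (G.lap ℓ) b.succAbove b w) i).symm
  have hzero := eq_of_lap_mulVec_eq hG hℓ hLw (b := b) (by simp)
  exact hw (funext fun i => by simpa using congrFun hzero (b.succAbove i))

theorem res_succAbove_eq {G : WMG (Fin (p + 1)) E} (hG : G.Connected) (hℓ : ∀ k, 0 < ℓ k)
    (b : Fin (p + 1)) (i : Fin p) :
    G.res ℓ (b.succAbove i) b = ((G.lap ℓ).submatrix b.succAbove b.succAbove)⁻¹ i i := by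
  set A := (G.lap ℓ).submatrix b.succAbove b.succAbove
  have hA : IsUnit A.det := (det_lap_submatrix_succAbove_ne_zero hG hℓ b).isUnit
  set w := A⁻¹ *ᵥ Pi.single i 1
  have hv : G.lap ℓ *ᵥ b.insertNth 0 w = delta (b.succAbove i) - delta b := by
    refine lap_mulVec_eq_of_apply_succAbove b (by simp [delta, sum_sub_distrib]) fun j => ?_
    have hAw := congrFun (submatrix_succAbove_mulVec (G.lap ℓ) b.succAbove b w) j
    rw [mulVec_mulVec, mul_nonsing_inv _ hA, one_mulVec, Function.comp_apply] at hAw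
    rw [← hAw]
    simp [delta, Pi.single_apply, Fin.succAbove_ne]
  rw [res_eq_of_lap_mulVec hG hℓ hv (by simp), Fin.insertNth_apply_succAbove]
  simp [w]

theorem res_mul_det {G : WMG (Fin (p + 2)) E} (hG : G.Connected) (hℓ : ∀ k, 0 < ℓ k)
    (b : Fin (p + 2)) (i : Fin (p + 1)) :
    G.res ℓ (b.succAbove i) b * ((G.lap ℓ).submatrix b.succAbove b.succAbove).det =
      ((G.lap ℓ).submatrix (b.succAbove ∘ i.succAbove) (b.succAbove ∘ i.succAbove)).det := by
  have hA := det_lap_submatrix_succAbove_ne_zero hG hℓ b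
  rw [res_succAbove_eq hG hℓ, Matrix.inv_def, Matrix.smul_apply,
    adjugate_fin_succ_eq_det_submatrix, submatrix_submatrix, Ring.inverse_eq_inv', smul_eq_mul,
    Even.neg_one_pow ⟨i, rfl⟩]
  field_simp

end Resistance

theorem epsilon_mul_eta_sq {V E : Type} [Fintype V] [DecidableEq V] [Fintype E] [DecidableEq E]
    (G : WMG V E) (q : V → ℕ) (ℓ : E → ℝ) :
    G.epsilon q ℓ * G.eta ℓ ^ 2 =
      1 / (G.genus q : ℝ) *
          ∑ a, ∑ b, (q a : ℝ) * (G.Kdiv q b * (G.res ℓ a b * G.eta ℓ * G.eta ℓ))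
        + ((G.genus q : ℝ) - 1) / (3 * G.genus q) *
          ∑ k, ℓ k * (G.Fres ℓ k * G.eta ℓ * (G.Fres ℓ k * G.eta ℓ))
        + 1 / (2 * (G.genus q : ℝ)) * ∑ a, G.Kdiv q a * ∑ k, G.Fres ℓ k * G.eta ℓ *
          (G.res ℓ a (G.ends k).1 * G.eta ℓ + G.res ℓ a (G.ends k).2 * G.eta ℓ) := by
  simp only [epsilon, add_mul, mul_sum, sum_mul]
  congr 1
  congr 1
  · exact sum_congr rfl fun a _ => sum_congr rfl fun b _ => by ring
  · exact sum_congr rfl fun k _ => by ring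
  · exact sum_congr rfl fun a _ => sum_congr rfl fun k _ => by ring

section Polynomiality

variable {n m p : ℕ} {ℓ : Fin m → ℝ}

theorem eta_eq_prod_mul_det (G : WMG (Fin (p + 1)) (Fin m)) (b : Fin (p + 1))
    (hℓ : ∀ k, ℓ k ≠ 0) :
    G.eta ℓ = (∏ k, ℓ k) * ((G.lap ℓ).submatrix b.succAbove b.succAbove).det := by
  rw [G.eta_eq_aeval_lapMinorPoly b, aeval_lapMinorPoly_eq_prod_mul_det _ _ hℓ]

theorem res_mul_eta {G : WMG (Fin (p + 2)) (Fin m)} (hG : G.Connected) (hℓ : ∀ k, 0 < ℓ k)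
    (b : Fin (p + 2)) (i : Fin (p + 1)) :
    G.res ℓ (b.succAbove i) b * G.eta ℓ =
      aeval ℓ (G.lapMinorPoly (b.succAbove ∘ i.succAbove)) := by
  have hℓ' : ∀ k, ℓ k ≠ 0 := fun k => (hℓ k).ne'
  rw [G.eta_eq_prod_mul_det b hℓ', aeval_lapMinorPoly_eq_prod_mul_det _ _ hℓ',
    ← res_mul_det hG hℓ]
  ring

theorem card_le_card_add_one {G : WMG (Fin n) (Fin m)} (hG : G.Connected) : n ≤ m + 1 := by
  obtain _ | p := n
  · omega
  have heta : G.eta (fun _ => 1) ≠ 0 := by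
    rw [G.eta_eq_prod_mul_det 0 fun _ => one_ne_zero]
    simpa using det_lap_submatrix_succAbove_ne_zero hG (fun _ => one_pos) 0
  obtain ⟨T, -, hT⟩ := exists_ne_zero_of_sum_ne_zero heta
  have hTree : G.IsSpanningTree T := by_contra fun h => hT (if_neg h)
  have hcard := hTree.1
  have hle := T.card_le_univ
  simp only [Fintype.card_fin] at hcard hle
  omega

theorem isHomogeneousRatPoly_eta (G : WMG (Fin n) (Fin m)) :
    IsHomogeneousRatPoly (m + 1 - n) G.eta := by
  refine IsHomogeneousRatPoly.sum fun T _ => ?_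
  by_cases hT : G.IsSpanningTree T
  · simp only [if_pos hT]
    convert IsHomogeneousRatPoly.prod_coord Tᶜ using 1
    have hcard := hT.1
    rw [Fintype.card_fin] at hcard
    rw [card_compl, Fintype.card_fin]
    omega
  · simpa only [if_neg hT] using IsHomogeneousRatPoly.zero

theorem isHomogeneousRatPoly_res_mul_eta {G : WMG (Fin n) (Fin m)} (hG : G.Connected)
    (a b : Fin n) : IsHomogeneousRatPoly (m + 2 - n) fun ℓ => G.res ℓ a b * G.eta ℓ := by
  by_cases hab : a = b
  · subst hab
    exact IsHomogeneousRatPoly.zero.congr fun ℓ hℓ => by rw [res_self hG hℓ, zero_mul]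
  obtain ⟨p, rfl⟩ : ∃ p, n = p + 2 := ⟨n - 2, by have := Fin.val_ne_of_ne hab; omega⟩
  obtain ⟨i, rfl⟩ := Fin.exists_succAbove_eq hab
  rw [Nat.add_sub_add_right]
  exact (IsHomogeneousRatPoly.of_isHomogeneous (G.lapMinorPoly_isHomogeneous _)).congr
    fun ℓ hℓ => (res_mul_eta hG hℓ b i).symm

theorem isHomogeneousRatPoly_Fres_mul_eta {G : WMG (Fin n) (Fin m)} (hG : G.Connected)
    (k : Fin m) : IsHomogeneousRatPoly (m + 1 - n) fun ℓ => G.Fres ℓ k * G.eta ℓ := by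
  by_cases hk : (G.ends k).1 = (G.ends k).2
  · refine G.isHomogeneousRatPoly_eta.congr fun ℓ hℓ => ?_
    rw [Fres, hk, res_self hG hℓ, zero_div, sub_zero, one_mul]
  obtain ⟨p, rfl⟩ : ∃ p, n = p + 2 := ⟨n - 2, by have := Fin.val_ne_of_ne hk; omega⟩
  obtain ⟨i, hi⟩ := Fin.exists_succAbove_eq hk
  set r := (G.ends k).2.succAbove ∘ i.succAbove
  have hr : ∀ j, r j ≠ (G.ends k).1 ∧ r j ≠ (G.ends k).2 := fun j =>
    ⟨hi ▸ Fin.succAbove_right_injective.ne (Fin.succAbove_ne _ _), Fin.succAbove_ne _ _⟩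
  have hdeg : m + 1 - (p + 2) = m - p - 1 := by omega
  refine (G.isHomogeneousRatPoly_eta.sub (.of_isHomogeneous
    (hdeg ▸ G.lapMinorPolyDivX_isHomogeneous r k))).congr fun ℓ hℓ => ?_
  have hres := res_mul_eta hG hℓ (G.ends k).2 i
  rw [hi, G.lapMinorPoly_eq_X_mul hr, map_mul, aeval_X] at hres
  rw [Fres, sub_mul, one_mul, div_mul_eq_mul_div, hres, mul_div_cancel_left₀ _ (hℓ k).ne']

end Polynomiality

end WMG

theorem stmt_7_general {n m : ℕ} (G : WMG (Fin n) (Fin m)) (hG : G.Connected)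
    (q : Fin n → ℕ) :
    ∃ P : MvPolynomial (Fin m) ℚ, P.IsHomogeneous (2 * m + 3 - 2 * n) ∧
      ∀ ℓ : Fin m → ℝ, (∀ k, 0 < ℓ k) →
        G.epsilon q ℓ * (G.eta ℓ) ^ 2 = MvPolynomial.aeval ℓ P := by
  have hnm := WMG.card_le_card_add_one hG
  have hη := G.isHomogeneousRatPoly_eta
  have hR := WMG.isHomogeneousRatPoly_res_mul_eta hG
  have hF := WMG.isHomogeneousRatPoly_Fres_mul_eta hG
  have hKrat : ∀ a, ∃ r : ℚ, (r : ℝ) = G.Kdiv q a :=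
    fun a => ⟨2 * q a + G.valence a - 2, by simp [WMG.Kdiv]⟩
  refine IsHomogeneousRatPoly.congr ?_ fun ℓ _ => (G.epsilon_mul_eta_sq q ℓ).symm
  refine .add (.add ?_ ?_) ?_
  · refine .const_mul ⟨1 / G.genus q, by push_cast; rfl⟩ (.sum fun a _ => .sum fun b _ => ?_)
    exact .const_mul ⟨q a, by simp⟩ (.const_mul (hKrat b) ((hR a b).mul hη (by omega)))
  · refine .const_mul ⟨(G.genus q - 1) / (3 * G.genus q), by push_cast; rfl⟩ (.sum fun k _ => ?_)
    exact (IsHomogeneousRatPoly.coord k).mul ((hF k).mul (hF k) rfl) (by omega)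
  · refine .const_mul ⟨1 / (2 * G.genus q), by push_cast; rfl⟩ (.sum fun a _ => ?_)
    exact .const_mul (hKrat a) (.sum fun k _ => (hF k).mul ((hR _ _).add (hR _ _)) (by omega))

/-- Let `G` be a connected weighted multigraph with polarization `q` of genus `g ≥ 1`
(with the canonical divisor `K(p_i) = 2 q(p_i) + v(p_i) - 2` nonnegative at every vertex).
Then there is a homogeneous polynomial `P` in `m` variables of degree
`2 b_1 + 1 = 2(m - n + 1) + 1` with rational coefficients such that for all positive
edge lengths, `ε(G) · η_G(ℓ)² = P(ℓ)`. -/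
theorem stmt_7 {n m : ℕ} (G : WMG (Fin n) (Fin m)) (hG : G.Connected)
    (q : Fin n → ℕ) (hK : ∀ a, 2 ≤ 2 * q a + G.valence a) (hg : 1 ≤ G.genus q) :
    ∃ P : MvPolynomial (Fin m) ℚ, P.IsHomogeneous (2 * m + 3 - 2 * n) ∧
      ∀ ℓ : Fin m → ℝ, (∀ k, 0 < ℓ k) →
        G.epsilon q ℓ * (G.eta ℓ) ^ 2 = MvPolynomial.aeval ℓ P :=
  stmt_7_general G hG q
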